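/- For every a ∈ P_n, the infimum of total lengths sup_{s<1} L(γ|_{[0,s]}) over all paths γ : [0,1) → P_n that are piecewise C¹ on every subinterval [0,s] with s < 1, satisfy γ(0) = a, and satisfy det(g⁻¹γ(t)) → 0 as t → 1, equals (4/√n)·(det(g⁻¹a))^{1/4}. (That is, the distance from a to the singular point [0] of the metric completion of (P_n,d) is (4/√n)·(det(g⁻¹a))^{1/4}, realized by the straight segment t ↦ (1−t)·a.) -/

import Mathlib

open Matrix Real MeasureTheory Filter

noncomputable section

/-- The set of real symmetric positive-definite `n × n` matrices. -/
def Pn (n : ℕ) : Set (Matrix (Fin n) (Fin n) ℝ) := {a | a.PosDef}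

/-- `tr_a(b) = tr(a⁻¹ b)`. -/
def trA {n : ℕ} (a b : Matrix (Fin n) (Fin n) ℝ) : ℝ := (a⁻¹ * b).trace

/-- `tr_a(b²) = tr((a⁻¹ b)²)`. -/
def trSq {n : ℕ} (a b : Matrix (Fin n) (Fin n) ℝ) : ℝ := ((a⁻¹ * b) * (a⁻¹ * b)).trace

/-- The `a`-traceless part `b_T = b - (1/n) tr_a(b) a`. -/
def tracelessPart {n : ℕ} (a b : Matrix (Fin n) (Fin n) ℝ) : Matrix (Fin n) (Fin n) ℝ :=
  b - ((trA a b) / (n : ℝ)) • a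

/-- `(det (g⁻¹ a))^{1/4}`. -/
def qdet {n : ℕ} (g a : Matrix (Fin n) (Fin n) ℝ) : ℝ := ((g⁻¹ * a).det) ^ ((1 : ℝ) / 4)

/-- The norm `‖b‖_a = (tr((a⁻¹b)²))^{1/2} (det (g⁻¹ a))^{1/4}`. -/
def fiberNorm {n : ℕ} (g a b : Matrix (Fin n) (Fin n) ℝ) : ℝ :=
  Real.sqrt (trSq a b) * qdet g a

/-- Entrywise derivative of a path of matrices. -/
def pathDeriv {n : ℕ} (γ : ℝ → Matrix (Fin n) (Fin n) ℝ) (t : ℝ) : Matrix (Fin n) (Fin n) ℝ :=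
  Matrix.of fun i j => deriv (fun s => γ s i j) t

/-- A path of matrices is `C¹` on a set if it is entrywise `C¹` there. -/
def C1On {n : ℕ} (γ : ℝ → Matrix (Fin n) (Fin n) ℝ) (s : Set ℝ) : Prop :=
  ∀ i j, ContDiffOn ℝ 1 (fun t => γ t i j) s

/-- `γ` is piecewise `C¹` on `[t₀, t₁]`. -/
def PiecewiseC1On {n : ℕ} (γ : ℝ → Matrix (Fin n) (Fin n) ℝ) (t₀ t₁ : ℝ) : Prop :=
  ContinuousOn γ (Set.Icc t₀ t₁) ∧
  ∃ (k : ℕ) (s : Fin (k + 1) → ℝ), StrictMono s ∧ s 0 = t₀ ∧ s (Fin.last k) = t₁ ∧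
    ∀ i : Fin k, C1On γ (Set.Icc (s i.castSucc) (s i.succ))

/-- Length of a path with respect to the fiber metric determined by `g`. -/
def pathLength {n : ℕ} (g : Matrix (Fin n) (Fin n) ℝ) (γ : ℝ → Matrix (Fin n) (Fin n) ℝ)
    (t₀ t₁ : ℝ) : ℝ :=
  ∫ t in t₀..t₁, fiberNorm g (γ t) (pathDeriv γ t)

/-- The Riemannian distance: the infimum of lengths of piecewise `C¹` paths in `P_n`. -/
def ebinDist {n : ℕ} (g a₀ a₁ : Matrix (Fin n) (Fin n) ℝ) : ℝ :=
  sInf {L : ℝ | ∃ γ : ℝ → Matrix (Fin n) (Fin n) ℝ,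
    PiecewiseC1On γ 0 1 ∧ (∀ t ∈ Set.Icc (0 : ℝ) 1, γ t ∈ Pn n) ∧
    γ 0 = a₀ ∧ γ 1 = a₁ ∧ L = pathLength g γ 0 1}

/-- `a·exp(a⁻¹ b)`, using the matrix exponential. -/
def expAt {n : ℕ} (a b : Matrix (Fin n) (Fin n) ℝ) : Matrix (Fin n) (Fin n) ℝ :=
  a * NormedSpace.exp (a⁻¹ * b)

/-- The explicit geodesic with initial point `a₀` and initial tangent `h`. -/
def geodesicPath {n : ℕ} (a₀ h : Matrix (Fin n) (Fin n) ℝ) (t : ℝ) : Matrix (Fin n) (Fin n) ℝ :=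
  let hT := tracelessPart a₀ h
  let q : ℝ := 1 + t / 4 * trA a₀ h
  let r : ℝ := t / 4 * Real.sqrt ((n : ℝ) * trSq a₀ hT)
  if hT = 0 then (q ^ ((4 : ℝ) / n)) • a₀
  else ((q ^ 2 + r ^ 2) ^ ((2 : ℝ) / n)) •
    (a₀ * NormedSpace.exp
      ((4 * Complex.arg ⟨q, r⟩ / Real.sqrt ((n : ℝ) * trSq a₀ hT)) • (a₀⁻¹ * hT)))

/-- The inverse `ψ` of the Riemannian exponential mapping based at `a₀`. -/
def psiMap {n : ℕ} (a₀ b : Matrix (Fin n) (Fin n) ℝ) : Matrix (Fin n) (Fin n) ℝ :=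
  let bT := tracelessPart a₀ b
  let ω : ℝ := Real.sqrt ((n : ℝ) * trSq a₀ bT) / 4
  if bT = 0 then ((4 / (n : ℝ)) * (Real.exp (trA a₀ b / 4) - 1)) • a₀
  else ((4 / (n : ℝ)) * (Real.exp (trA a₀ b / 4) * Real.cos ω - 1)) • a₀ +
    ((4 / Real.sqrt ((n : ℝ) * trSq a₀ bT)) * Real.exp (trA a₀ b / 4) * Real.sin ω) • bT

/-!
Along a path `γ` in `P_n` the function `q = det(g⁻¹γ)^{1/4}` has derivative `q · tr(γ⁻¹γ') / 4`,
and by Cauchy–Schwarz `tr(γ⁻¹γ')² ≤ n · tr((γ⁻¹γ')²)`, so `|q'| ≤ (√n / 4) ‖γ'‖_γ`. Integrating, any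
path starting at `a` along which `det(g⁻¹γ) → 0` has length at least `(4/√n) q(a)`. On the segment
`t ↦ (1 - t) a` the matrix `γ⁻¹γ'` is a multiple of the identity, Cauchy–Schwarz is an equality,
and the length up to time `s` is `(4/√n) q(a) (1 - (1 - s)^{n/4})`.
-/

open Set Topology

section MatrixCalculus

variable {ι : Type*} [Fintype ι] [DecidableEq ι]

theorem Matrix.sum_det_updateRow_eq_trace_adjugate_mul {R : Type*} [CommRing R]
    (A B : Matrix ι ι R) :
    ∑ i, (A.updateRow i (B i)).det = (A.adjugate * B).trace := by
  simp only [← cramer_transpose_apply, cramer_eq_adjugate_mulVec, ← adjugate_transpose, trace,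
    diag_apply, mul_apply, mulVec, dotProduct, transpose_apply]
  exact Finset.sum_comm

theorem hasDerivAt_det {𝕜 : Type*} [NontriviallyNormedField 𝕜] {f : 𝕜 → Matrix ι ι 𝕜}
    {f' : Matrix ι ι 𝕜} {x : 𝕜} (h : ∀ i j, HasDerivAt (fun t => f t i j) (f' i j) x) :
    HasDerivAt (fun t => (f t).det) ((f x).adjugate * f').trace x := by
  let D : ContinuousMultilinearMap 𝕜 (fun _ : ι => ι → 𝕜) 𝕜 :=
    ⟨(detRowAlternating : (ι → 𝕜) [⋀^ι]→ₗ[𝕜] 𝕜).toMultilinearMap,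
      show Continuous fun M : Matrix ι ι 𝕜 => M.det from continuous_id.matrix_det⟩
  have hrows : HasDerivAt (fun t i j => f t i j) (fun i j => f' i j) x :=
    hasDerivAt_pi.2 fun i => hasDerivAt_pi.2 fun j => h i j
  have hD := (D.hasFDerivAt fun i j => f x i j).comp_hasDerivAt x hrows
  rw [ContinuousMultilinearMap.linearDeriv_apply] at hD
  rw [← sum_det_updateRow_eq_trace_adjugate_mul]
  exact hD

theorem hasDerivAt_det_of_isUnit {𝕜 : Type*} [NontriviallyNormedField 𝕜]
    {f : 𝕜 → Matrix ι ι 𝕜} {f' : Matrix ι ι 𝕜} {x : 𝕜}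
    (h : ∀ i j, HasDerivAt (fun t => f t i j) (f' i j) x) (hx : IsUnit (f x).det) :
    HasDerivAt (fun t => (f t).det) ((f x).det * ((f x)⁻¹ * f').trace) x := by
  have hadj : (f x).adjugate = (f x).det • (f x)⁻¹ := by
    rw [inv_def, smul_smul, Ring.mul_inverse_cancel _ hx, one_smul]
  simpa only [hadj, smul_mul, trace_smul, smul_eq_mul] using hasDerivAt_det h

theorem ContinuousOn.matrix_inv {X : Type*} [TopologicalSpace X] {A : X → Matrix ι ι ℝ}
    {s : Set X} (hA : ContinuousOn A s) (hdet : ∀ x ∈ s, IsUnit (A x).det) :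
    ContinuousOn (fun x => (A x)⁻¹) s := fun x hx =>
  (continuousAt_matrix_inv _ ((hdet x hx).unit_spec ▸
    NormedRing.inverse_continuousAt (hdet x hx).unit)).comp_continuousWithinAt (hA x hx)

end MatrixCalculus

section TraceInequality

variable {ι : Type*} [Fintype ι]

theorem Matrix.IsSymm.sq_trace_le {T : Matrix ι ι ℝ} (hT : T.IsSymm) :
    T.trace ^ 2 ≤ Fintype.card ι * (T * T).trace := by
  have hsq : (T * T).trace = ∑ i, ∑ j, T i j ^ 2 := by
    simp only [trace, diag_apply, mul_apply, hT.apply, sq]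
  calc T.trace ^ 2 ≤ Fintype.card ι * ∑ i, T i i ^ 2 := sq_sum_le_card_mul_sum_sq
    _ ≤ Fintype.card ι * (T * T).trace := by
      rw [hsq]
      gcongr with i
      exact Finset.single_le_sum (f := fun j => T i j ^ 2) (fun j _ => sq_nonneg _)
        (Finset.mem_univ i)

open scoped MatrixOrder in
theorem Matrix.PosDef.sq_trace_inv_mul_le [DecidableEq ι] {a b : Matrix ι ι ℝ} (ha : a.PosDef)
    (hb : b.IsSymm) :
    (a⁻¹ * b).trace ^ 2 ≤ Fintype.card ι * (a⁻¹ * b * (a⁻¹ * b)).trace := by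
  -- conjugating by `√a` turns `a⁻¹ b` into the symmetric matrix `√a⁻¹ b √a⁻¹`
  set c := CFC.sqrt a
  have hcc : c * c = a := CFC.sqrt_mul_sqrt_self a ha.posSemidef.nonneg
  have hc : IsUnit c := isUnit_of_mul_isUnit_left (hcc ▸ ha.isUnit)
  have hcdet : IsUnit c.det := (isUnit_iff_isUnit_det c).1 hc
  have hcsymm : c.IsSymm := isHermitian_iff_isSymm.1 (CFC.sqrt_nonneg a).posSemidef.isHermitian
  set T := c⁻¹ * b * c⁻¹
  have hT : T.IsSymm := by
    simp only [T, IsSymm, transpose_mul, transpose_nonsing_inv, hcsymm.eq, hb.eq, Matrix.mul_assoc]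
  have hconj : a⁻¹ * b = c⁻¹ * T * c := by
    simp only [T, ← hcc, mul_inv_rev, Matrix.mul_assoc, nonsing_inv_mul _ hcdet, Matrix.mul_one]
  have hconj_sq : a⁻¹ * b * (a⁻¹ * b) = c⁻¹ * (T * T) * c := by
    rw [hconj]
    simp only [Matrix.mul_assoc, mul_nonsing_inv_cancel_left _ _ hcdet]
  rw [hconj_sq, hconj, trace_conj' hc, trace_conj' hc]
  exact hT.sq_trace_le

end TraceInequality

section FiberMetric

variable {n : ℕ} {g a b : Matrix (Fin n) (Fin n) ℝ}

theorem det_inv_mul_pos (hg : g.PosDef) (ha : a.PosDef) : 0 < (g⁻¹ * a).det := by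
  rw [det_mul, det_nonsing_inv, Ring.inverse_eq_inv']
  exact mul_pos (inv_pos.mpr hg.det_pos) ha.det_pos

theorem qdet_pos (hg : g.PosDef) (ha : a.PosDef) : 0 < qdet g a :=
  Real.rpow_pos_of_pos (det_inv_mul_pos hg ha) _

theorem abs_trA_le (ha : a.PosDef) (hb : b.IsSymm) : |trA a b| ≤ √n * √(trSq a b) := by
  rw [← Real.sqrt_sq_eq_abs, ← Real.sqrt_mul n.cast_nonneg]
  exact Real.sqrt_le_sqrt (by simpa [trA, trSq] using ha.sq_trace_inv_mul_le hb)

theorem neg_qdet_mul_trA_div_le_fiberNorm (hg : g.PosDef) (ha : a.PosDef) (hb : b.IsSymm) :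
    -(qdet g a * trA a b) / √n ≤ fiberNorm g a b := by
  have hq := qdet_pos hg ha
  refine div_le_of_le_mul₀ (Real.sqrt_nonneg _) (mul_nonneg (Real.sqrt_nonneg _) hq.le) ?_
  calc -(qdet g a * trA a b) ≤ qdet g a * |trA a b| := by
        rw [← abs_of_pos hq, ← abs_mul, abs_of_pos hq]; exact neg_le_abs _
    _ ≤ qdet g a * (√n * √(trSq a b)) := by gcongr; exact abs_trA_le ha hb
    _ = fiberNorm g a b * √n := by rw [fiberNorm]; ring

theorem continuousOn_qdet {X : Type*} [TopologicalSpace X] {γ : X → Matrix (Fin n) (Fin n) ℝ}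
    {s : Set X} (hγ : ContinuousOn γ s) : ContinuousOn (fun t => qdet g (γ t)) s :=
  ((continuous_const.matrix_mul continuous_id).matrix_det.comp_continuousOn hγ).rpow_const
    fun _ _ => Or.inr (by norm_num)

theorem continuousOn_fiberNorm {X : Type*} [TopologicalSpace X]
    {γ β : X → Matrix (Fin n) (Fin n) ℝ} {s : Set X} (hγ : ContinuousOn γ s)
    (hβ : ContinuousOn β s) (hdet : ∀ t ∈ s, IsUnit (γ t).det) :
    ContinuousOn (fun t => fiberNorm g (γ t) (β t)) s := by
  have hA := (hγ.matrix_inv hdet).mul hβ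
  exact (Real.continuous_sqrt.comp_continuousOn
    (continuous_id.matrix_trace.comp_continuousOn (hA.mul hA))).mul (continuousOn_qdet hγ)

theorem hasDerivAt_qdet (hg : g.PosDef) {γ : ℝ → Matrix (Fin n) (Fin n) ℝ} {t : ℝ}
    (hγ : (γ t).PosDef) (h : ∀ i j, HasDerivAt (fun s => γ s i j) (b i j) t) :
    HasDerivAt (fun s => qdet g (γ s)) (qdet g (γ t) * trA (γ t) b / 4) t := by
  have hD := det_inv_mul_pos hg hγ
  have hdet : HasDerivAt (fun s => (g⁻¹ * γ s).det) ((g⁻¹ * γ t).det * trA (γ t) b) t := by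
    simp only [det_mul, mul_assoc]
    exact (hasDerivAt_det_of_isUnit h ((isUnit_iff_isUnit_det _).1 hγ.isUnit)).const_mul _
  convert hdet.rpow_const (p := 1 / 4) (Or.inl hD.ne') using 1
  · rfl
  · rw [qdet, Real.rpow_sub hD, Real.rpow_one]
    field_simp

end FiberMetric

section LowerBound

variable {n : ℕ} {γ : ℝ → Matrix (Fin n) (Fin n) ℝ} {u v : ℝ}

theorem C1On.continuousOn {s : Set ℝ} (h : C1On γ s) : ContinuousOn γ s :=
  continuousOn_pi.2 fun i => continuousOn_pi.2 fun j => (h i j).continuousOn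

theorem C1On.hasDerivAt (h : C1On γ (Icc u v)) {t : ℝ} (ht : t ∈ Ioo u v) (i j : Fin n) :
    HasDerivAt (fun s => γ s i j) (pathDeriv γ t i j) t :=
  (((h i j).differentiableOn one_ne_zero t (Ioo_subset_Icc_self ht)).differentiableAt
    (Icc_mem_nhds ht.1 ht.2)).hasDerivAt

theorem C1On.exists_continuousOn_eqOn_pathDeriv (h : C1On γ (Icc u v)) (huv : u < v) :
    ∃ G, ContinuousOn G (Icc u v) ∧ EqOn (pathDeriv γ) G (Ioo u v) := by
  refine ⟨fun t => of fun i j => derivWithin (fun s => γ s i j) (Icc u v) t,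
    continuousOn_pi.2 fun i => continuousOn_pi.2 fun j =>
      (h i j).continuousOn_derivWithin (uniqueDiffOn_Icc huv) le_rfl, fun t ht => ?_⟩
  ext i j
  exact (derivWithin_of_mem_nhds (Icc_mem_nhds ht.1 ht.2)).symm

theorem pathDeriv_isSymm {t : ℝ} (h : ∀ᶠ s in 𝓝 t, (γ s).IsSymm) : (pathDeriv γ t).IsSymm :=
  IsSymm.ext fun i j =>
    Filter.EventuallyEq.deriv_eq (f := fun s => γ s i j) (h.mono fun _ hs => hs.apply i j)

theorem qdet_sub_le_integral_fiberNorm {g : Matrix (Fin n) (Fin n) ℝ} (hg : g.PosDef)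
    (huv : u < v) (hP : ∀ t ∈ Icc u v, (γ t).PosDef) (hγ : C1On γ (Icc u v)) :
    IntervalIntegrable (fun t => fiberNorm g (γ t) (pathDeriv γ t)) volume u v ∧
      4 / √n * qdet g (γ u) - 4 / √n * qdet g (γ v) ≤
        ∫ t in u..v, fiberNorm g (γ t) (pathDeriv γ t) := by
  -- `pathDeriv` is built from `deriv`, which may be junk at `u` and `v`; integrability comes from
  -- the continuous one-sided derivative `G`, which agrees with it on `Ioo u v`
  obtain ⟨G, hGc, hGeq⟩ := hγ.exists_continuousOn_eqOn_pathDeriv huv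
  have hint : IntegrableOn (fun t => fiberNorm g (γ t) (pathDeriv γ t)) (Icc u v) := by
    rw [integrableOn_Icc_iff_integrableOn_Ioo]
    refine (((continuousOn_fiberNorm (g := g) hγ.continuousOn hGc fun t ht =>
      (isUnit_iff_isUnit_det _).1 (hP t ht).isUnit).integrableOn_compact
        isCompact_Icc).mono_set Ioo_subset_Icc_self).congr_fun (fun t ht => ?_) measurableSet_Ioo
    rw [hGeq ht]
  refine ⟨(intervalIntegrable_iff_integrableOn_Icc_of_le huv.le).2 hint, ?_⟩
  have hderiv : ∀ t ∈ Ioo u v, HasDerivAt (fun s => -(4 / √n) * qdet g (γ s))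
      (-(4 / √n) * (qdet g (γ t) * trA (γ t) (pathDeriv γ t) / 4)) t := fun t ht =>
    (hasDerivAt_qdet hg (hP t (Ioo_subset_Icc_self ht)) (hγ.hasDerivAt ht)).const_mul _
  have hbound : ∀ t ∈ Ioo u v,
      -(4 / √n) * (qdet g (γ t) * trA (γ t) (pathDeriv γ t) / 4) ≤
        fiberNorm g (γ t) (pathDeriv γ t) := by
    intro t ht
    have hsymm : (pathDeriv γ t).IsSymm := pathDeriv_isSymm <|
      Filter.mem_of_superset (Icc_mem_nhds ht.1 ht.2) fun s hs =>
        isHermitian_iff_isSymm.1 (hP s hs).isHermitian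
    convert neg_qdet_mul_trA_div_le_fiberNorm hg (hP t (Ioo_subset_Icc_self ht)) hsymm using 1
    ring
  have hcont : ContinuousOn (fun s => -(4 / √n) * qdet g (γ s)) (Icc u v) :=
    continuousOn_const.mul (continuousOn_qdet hγ.continuousOn)
  have := intervalIntegral.sub_le_integral_of_hasDeriv_right_of_le huv.le hcont
    (fun t ht => (hderiv t ht).hasDerivWithinAt) hint hbound
  linarith

theorem sub_le_integral_of_partition {f F : ℝ → ℝ} {k : ℕ} {s : Fin (k + 1) → ℝ}
    (h : ∀ i : Fin k, IntervalIntegrable f volume (s i.castSucc) (s i.succ) ∧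
      F (s i.castSucc) - F (s i.succ) ≤ ∫ x in s i.castSucc..s i.succ, f x) :
    IntervalIntegrable f volume (s 0) (s (Fin.last k)) ∧
      F (s 0) - F (s (Fin.last k)) ≤ ∫ x in s 0..s (Fin.last k), f x := by
  induction k with
  | zero => simp
  | succ k ih =>
    obtain ⟨hint, hle⟩ := ih (s := s ∘ Fin.castSucc) fun i => h i.castSucc
    obtain ⟨hint', hle'⟩ := h (Fin.last k)
    simp only [Function.comp_apply, Fin.castSucc_zero] at hint hle
    rw [Fin.succ_last] at hint' hle'
    refine ⟨hint.trans hint', ?_⟩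
    rw [← intervalIntegral.integral_add_adjacent_intervals hint hint']
    linarith

theorem qdet_sub_le_pathLength {g : Matrix (Fin n) (Fin n) ℝ} (hg : g.PosDef) {t₀ t₁ : ℝ}
    (hγ : PiecewiseC1On γ t₀ t₁) (hP : ∀ t ∈ Icc t₀ t₁, (γ t).PosDef) :
    4 / √n * (qdet g (γ t₀) - qdet g (γ t₁)) ≤ pathLength g γ t₀ t₁ := by
  obtain ⟨-, k, s, hs, rfl, rfl, hC1⟩ := hγ
  rw [mul_sub]
  refine (sub_le_integral_of_partition (F := fun t => 4 / √n * qdet g (γ t)) fun i =>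
    qdet_sub_le_integral_fiberNorm hg (hs i.castSucc_lt_succ) (fun t ht => hP t ?_) (hC1 i)).2
  exact ⟨(hs.monotone (Fin.zero_le _)).trans ht.1, ht.2.trans (hs.monotone (Fin.le_last _))⟩

end LowerBound

section Segment

variable {n : ℕ} {g a : Matrix (Fin n) (Fin n) ℝ}

theorem c1On_segment (a : Matrix (Fin n) (Fin n) ℝ) (s : Set ℝ) :
    C1On (fun t => (1 - t) • a) s := fun i j => by
  simp only [Matrix.smul_apply, smul_eq_mul]
  fun_prop

theorem piecewiseC1On_segment (a : Matrix (Fin n) (Fin n) ℝ) {s : ℝ} (hs : 0 < s) :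
    PiecewiseC1On (fun t => (1 - t) • a) 0 s :=
  ⟨(c1On_segment a _).continuousOn, 1, ![0, s], Fin.strictMono_iff_lt_succ.2 fun i => by
    fin_cases i; simpa using hs, rfl, rfl, fun _ => c1On_segment a _⟩

theorem pathDeriv_segment (a : Matrix (Fin n) (Fin n) ℝ) (t : ℝ) :
    pathDeriv (fun s => (1 - s) • a) t = -a := by
  ext i j
  simp [pathDeriv]

theorem qdet_smul (hg : g.PosDef) (ha : a.PosDef) {c : ℝ} (hc : 0 ≤ c) :
    qdet g (c • a) = c ^ ((n : ℝ) / 4) * qdet g a := by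
  rw [qdet, qdet, Matrix.mul_smul, det_smul, Fintype.card_fin,
    Real.mul_rpow (pow_nonneg hc n) (det_inv_mul_pos hg ha).le, ← Real.rpow_natCast,
    ← Real.rpow_mul hc, mul_one_div]

theorem fiberNorm_segment (hg : g.PosDef) (ha : a.PosDef) {t : ℝ} (ht : t < 1) :
    fiberNorm g ((1 - t) • a) (-a) = √n * qdet g a * (1 - t) ^ ((n : ℝ) / 4 - 1) := by
  have h1t : 0 < 1 - t := by linarith
  have hdet : IsUnit a.det := (isUnit_iff_isUnit_det a).1 ha.isUnit
  have hmul : ((1 - t) • a)⁻¹ * -a = -((1 - t)⁻¹ • (1 : Matrix (Fin n) (Fin n) ℝ)) := by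
    have : Invertible (1 - t) := invertibleOfNonzero h1t.ne'
    rw [inv_smul _ _ hdet, invOf_eq_inv, Matrix.mul_neg, smul_mul, nonsing_inv_mul a hdet]
  have htrSq : trSq ((1 - t) • a) (-a) = ((1 - t)⁻¹) ^ 2 * n := by
    rw [trSq, hmul, neg_mul_neg, smul_mul, Matrix.one_mul, smul_smul, trace_smul, trace_one]
    simp [sq]
  rw [fiberNorm, htrSq, qdet_smul hg ha h1t.le, Real.sqrt_mul (sq_nonneg _),
    Real.sqrt_sq (by positivity), Real.rpow_sub h1t, Real.rpow_one]
  field_simp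

theorem pathLength_segment (hn : n ≠ 0) (hg : g.PosDef) (ha : a.PosDef) {s : ℝ} (hs : s < 1) :
    pathLength g (fun t => (1 - t) • a) 0 s =
      4 / √n * qdet g a * (1 - (1 - s) ^ ((n : ℝ) / 4)) := by
  have hn' : (0 : ℝ) < n := by positivity
  have hEq : EqOn (fun t => fiberNorm g ((1 - t) • a) (pathDeriv (fun u => (1 - u) • a) t))
      (fun t => √n * qdet g a * (1 - t) ^ ((n : ℝ) / 4 - 1)) (uIcc 0 s) := fun t ht => by
    dsimp only
    rw [pathDeriv_segment, fiberNorm_segment hg ha (ht.2.trans_lt (max_lt one_pos hs))]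
  rw [pathLength, intervalIntegral.integral_congr hEq, intervalIntegral.integral_const_mul,
    intervalIntegral.integral_comp_sub_left (fun x => x ^ ((n : ℝ) / 4 - 1)),
    integral_rpow (Or.inl (by linarith [div_pos hn' four_pos])), sub_zero, sub_add_cancel,
    Real.one_rpow]
  have hsq : √n * √n = n := Real.mul_self_sqrt hn'.le
  field_simp
  linear_combination (1 - (1 - s) ^ ((n : ℝ) / 4)) * qdet g a * hsq

theorem tendsto_det_segment (hn : n ≠ 0) (g a : Matrix (Fin n) (Fin n) ℝ) :
    Tendsto (fun t : ℝ => (g⁻¹ * ((1 - t) • a)).det) (𝓝[<] 1) (𝓝 0) := by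
  simp only [Matrix.mul_smul, det_smul, Fintype.card_fin]
  have hcont : Continuous fun t : ℝ => (1 - t) ^ n * (g⁻¹ * a).det := by fun_prop
  simpa [zero_pow hn] using (hcont.tendsto 1).mono_left nhdsWithin_le_nhds

end Segment

theorem iSup_pathLength_segment_le {n : ℕ} (hn : n ≠ 0) {g a : Matrix (Fin n) (Fin n) ℝ}
    (hg : g.PosDef) (ha : a.PosDef) :
    ⨆ s ∈ Ico (0 : ℝ) 1, ENNReal.ofReal (pathLength g (fun t => (1 - t) • a) 0 s) ≤
      ENNReal.ofReal (4 / √n * qdet g a) := by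
  refine iSup₂_le fun s hs => ENNReal.ofReal_le_ofReal ?_
  rw [pathLength_segment hn hg ha hs.2]
  have : 0 ≤ (1 - s) ^ ((n : ℝ) / 4) := Real.rpow_nonneg (by linarith [hs.2]) _
  exact mul_le_of_le_one_right (by have := qdet_pos hg ha; positivity) (by linarith)

theorem ofReal_le_iSup_pathLength {n : ℕ} {g : Matrix (Fin n) (Fin n) ℝ}
    {γ : ℝ → Matrix (Fin n) (Fin n) ℝ} (hg : g.PosDef)
    (hγ : ∀ s : ℝ, 0 < s → s < 1 → PiecewiseC1On γ 0 s) (hP : ∀ t ∈ Ico (0 : ℝ) 1, γ t ∈ Pn n)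
    (hdet : Tendsto (fun t => (g⁻¹ * γ t).det) (𝓝[<] 1) (𝓝 0)) :
    ENNReal.ofReal (4 / √n * qdet g (γ 0)) ≤
      ⨆ s ∈ Ico (0 : ℝ) 1, ENNReal.ofReal (pathLength g γ 0 s) := by
  have hq : Tendsto (fun t => qdet g (γ t)) (𝓝[<] 1) (𝓝 0) := by
    simpa [qdet] using hdet.rpow_const (p := 1 / 4) (Or.inr (by norm_num))
  have hlim : Tendsto (fun s => ENNReal.ofReal (4 / √n * (qdet g (γ 0) - qdet g (γ s))))
      (𝓝[<] 1) (𝓝 (ENNReal.ofReal (4 / √n * qdet g (γ 0)))) :=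
    ENNReal.tendsto_ofReal (by simpa using (tendsto_const_nhds.sub hq).const_mul (4 / √n))
  refine le_of_tendsto hlim ?_
  filter_upwards [Ioo_mem_nhdsLT zero_lt_one] with s hs
  calc ENNReal.ofReal (4 / √n * (qdet g (γ 0) - qdet g (γ s)))
      ≤ ENNReal.ofReal (pathLength g γ 0 s) := ENNReal.ofReal_le_ofReal <|
        qdet_sub_le_pathLength hg (hγ s hs.1 hs.2) fun t ht => hP t ⟨ht.1, ht.2.trans_lt hs.2⟩
    _ ≤ ⨆ s ∈ Ico (0 : ℝ) 1, ENNReal.ofReal (pathLength g γ 0 s) :=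
      le_iSup₂ (f := fun s (_ : s ∈ Ico (0 : ℝ) 1) => ENNReal.ofReal (pathLength g γ 0 s))
        s ⟨hs.1.le, hs.2⟩

/-- the distance from `a` to the singular point `[0]` of the completion is
`(4/√n)·(det(g⁻¹a))^{1/4}`. -/
theorem stmt_18 (n : ℕ) (hn : 1 ≤ n) (g : Matrix (Fin n) (Fin n) ℝ) (hg : g ∈ Pn n)
    (a : Matrix (Fin n) (Fin n) ℝ) (ha : a ∈ Pn n) :
    sInf {L : ENNReal | ∃ γ : ℝ → Matrix (Fin n) (Fin n) ℝ,
        (∀ s : ℝ, 0 < s → s < 1 → PiecewiseC1On γ 0 s) ∧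
        (∀ t ∈ Set.Ico (0 : ℝ) 1, γ t ∈ Pn n) ∧
        γ 0 = a ∧
        Filter.Tendsto (fun t => (g⁻¹ * γ t).det) (nhdsWithin 1 (Set.Iio 1)) (nhds 0) ∧
        L = ⨆ s ∈ Set.Ico (0 : ℝ) 1, ENNReal.ofReal (pathLength g γ 0 s)} =
      ENNReal.ofReal (4 / Real.sqrt n * qdet g a) := by
  have hn0 : n ≠ 0 := Nat.one_le_iff_ne_zero.1 hn
  refine le_antisymm (sInf_le_of_le ⟨fun t => (1 - t) • a,
    fun s hs _ => piecewiseC1On_segment a hs,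
    fun t ht => (ha : a.PosDef).smul (sub_pos.2 ht.2), by simp, tendsto_det_segment hn0 g a, rfl⟩
    (iSup_pathLength_segment_le hn0 hg ha)) (le_sInf ?_)
  rintro _ ⟨γ, hγ, hP, rfl, hdet, rfl⟩
  exact ofReal_le_iSup_pathLength hg hγ hP hdet

end
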